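/- arXiv:1907.02707 — 3 statements merged into one kernel-verified Lean document; each statement's English description precedes it below -/
import Mathlib

section
/- (One-step mirror descent bound) Under the assumptions of Section 3, let x_{i+1} = Prox_{β_i, x_i}(y_{i+1}) with β_i ≥ 2L, and define ξ_{i+1} = y_{i+1} − ∇φ(x_i). Then for all z ∈ X: F(x_{i+1}) − F(z) ≤ β_i[V_{x_i}(z) − V_{x_{i+1}}(z)] − ⟨ξ_{i+1}, x_i − z⟩ + ‖ξ_{i+1}‖_*² / β_i. -/
/-!
Write `B_f(x, z) = f z - f x - f' x (z - x)`, so that `V = B_ϑ` on `X`. First-order optimality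
of `x₁` for the convex-plus-smooth prox objective, combined with the three-point identity for
`B_ϑ`, bounds `ψ x₁ - ψ z` by `y (z - x₁) + β (V_{x₀} z - V_{x₀} x₁ - V_{x₁} z)`. The gradient
inequality for `φ` at `x₀` and the descent bound `B_φ(x₀, x₁) ≤ L/2 ‖x₁ - x₀‖²` handle
`φ x₁ - φ z`, and Young's inequality gives `ξ (x₀ - x₁) ≤ ‖ξ‖²/β + β/4 ‖x₁ - x₀‖²`. Strong
convexity gives `V_{x₀} x₁ ≥ ‖x₁ - x₀‖²/2`, and `β ≥ 2L` is exactly what lets `β V_{x₀} x₁`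
absorb the two quadratic error terms `L/2 ‖x₁ - x₀‖²` and `β/4 ‖x₁ - x₀‖²`.
-/

open Set Filter Topology AffineMap

theorem sub_sub_le_half_of_hasDerivWithinAt {g g' : ℝ → ℝ} {C : ℝ}
    (hg : ∀ t ∈ Icc (0 : ℝ) 1, HasDerivWithinAt g (g' t) (Icc 0 1) t)
    (hC : ∀ t ∈ Icc (0 : ℝ) 1, g' t - g' 0 ≤ C * t) :
    g 1 - g 0 - g' 0 ≤ C / 2 := by
  have hB (t : ℝ) :
      HasDerivAt (fun t => g 0 + g' 0 * t + C / 2 * t ^ 2) (g' 0 + C * t) t := by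
    refine ((((hasDerivAt_id' t).const_mul (g' 0)).const_add (g 0)).add
      ((hasDerivAt_pow 2 t).const_mul (C / 2))).congr_deriv ?_
    push_cast
    ring
  have := image_le_of_deriv_right_le_deriv_boundary (fun t ht => (hg t ht).continuousWithinAt)
    (fun t ht => (hg t (Ico_subset_Icc_self ht)).mono_of_mem_nhdsWithin
      (Icc_mem_nhdsGE_of_mem ht)) (by simp) (fun t _ => (hB t).continuousAt.continuousWithinAt)
    (fun t _ => (hB t).hasDerivWithinAt) (fun t ht => by linarith [hC t (Ico_subset_Icc_self ht)])
    (right_mem_Icc.2 zero_le_one)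
  linarith

section Bregman

variable {E : Type*} [NormedAddCommGroup E] [NormedSpace ℝ E] {X : Set E}

def bregman (f : E → ℝ) (f' : E → E →L[ℝ] ℝ) (x z : E) : ℝ := f z - f x - f' x (z - x)

theorem bregman_three_point (f : E → ℝ) (f' : E → E →L[ℝ] ℝ) (x y z : E) :
    bregman f f' x z - bregman f f' x y - bregman f f' y z = (f' y - f' x) (z - y) := by
  simp only [bregman, sub_apply, map_sub]
  ring

theorem hasFDerivWithinAt_bregman {f : E → ℝ} {f' : E → E →L[ℝ] ℝ} {a x : E}
    (hd : HasFDerivWithinAt f (f' x) X x) :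
    HasFDerivWithinAt (bregman f f' a) (f' x - f' a) X x := by
  have := (hd.sub_const (f a)).sub (((f' a).hasFDerivWithinAt).sub_const (f' a a))
  refine this.congr (fun z _ => ?_) ?_ <;> simp only [bregman, Pi.sub_apply, map_sub]

theorem ConvexOn.add_fderiv_le {f : E → ℝ} {f' : E →L[ℝ] ℝ} {x z : E}
    (hf : ConvexOn ℝ X f) (hx : x ∈ X) (hz : z ∈ X) (hd : HasFDerivWithinAt f f' X x) :
    f x + f' (z - x) ≤ f z := by
  have hmaps := hf.1.mapsTo_lineMap (𝕜 := ℝ) hx hz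
  have hg : ConvexOn ℝ (Icc (0 : ℝ) 1) (f ∘ lineMap x z) :=
    (hf.comp_affineMap (lineMap x z)).subset hmaps (convex_Icc 0 1)
  have hgd : HasDerivWithinAt (f ∘ lineMap x z) (f' (z - x)) (Icc (0 : ℝ) 1) 0 :=
    hd.comp_hasDerivWithinAt_of_eq 0 hasDerivWithinAt_lineMap hmaps (lineMap_apply_zero x z).symm
  have := hg.le_slope_of_hasDerivWithinAt (left_mem_Icc.2 zero_le_one)
    (right_mem_Icc.2 zero_le_one) zero_lt_one hgd
  simp only [slope_def_field, Function.comp, lineMap_apply_zero, lineMap_apply_one] at this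
  linarith

theorem IsMinOn.le_add_fderiv_of_convexOn {ψ s : E → ℝ} {s' : E →L[ℝ] ℝ} {x z : E}
    (hmin : IsMinOn (fun w => ψ w + s w) X x) (hψ : ConvexOn ℝ X ψ)
    (hs : HasFDerivWithinAt s s' X x) (hx : x ∈ X) (hz : z ∈ X) :
    ψ x ≤ ψ z + s' (z - x) := by
  have hmaps := hψ.1.mapsTo_lineMap (𝕜 := ℝ) hx hz
  have hgd : HasDerivWithinAt (s ∘ lineMap x z) (s' (z - x)) (Ioc (0 : ℝ) 1) 0 :=
    hs.comp_hasDerivWithinAt_of_eq 0 hasDerivWithinAt_lineMap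
      (hmaps.mono_left Ioc_subset_Icc_self) (lineMap_apply_zero x z).symm
  rw [hasDerivWithinAt_iff_tendsto_slope' (fun h => h.1.false),
    nhdsWithin_Ioc_eq_nhdsGT zero_lt_one] at hgd
  have hslope : ∀ t ∈ Ioc (0 : ℝ) 1, ψ x - ψ z ≤ slope (s ∘ lineMap x z) 0 t := by
    rintro t ⟨ht0, ht1⟩
    have hconv : ψ (lineMap x z t) ≤ (1 - t) * ψ x + t * ψ z := by
      rw [lineMap_apply_module]
      exact hψ.2 hx hz (by linarith) ht0.le (by ring)
    have hle : ψ x + s x ≤ ψ (lineMap x z t) + s (lineMap x z t) :=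
      hmin (hmaps ⟨ht0.le, ht1⟩)
    rw [slope_def_field, Function.comp_apply, Function.comp_apply, lineMap_apply_zero, sub_zero,
      le_div_iff₀ ht0]
    linarith
  have := ge_of_tendsto hgd <| by
    rw [← nhdsWithin_Ioc_eq_nhdsGT zero_lt_one]
    exact eventually_nhdsWithin_of_forall hslope
  linarith

theorem IsMinOn.prox_optimality {ψ ϑ : E → ℝ} {ϑ' : E → E →L[ℝ] ℝ} {y : E →L[ℝ] ℝ} {β : ℝ}
    {x₀ x₁ z : E} (hmin : IsMinOn (fun w => y w + ψ w + β * bregman ϑ ϑ' x₀ w) X x₁)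
    (hψ : ConvexOn ℝ X ψ) (hϑ : HasFDerivWithinAt ϑ (ϑ' x₁) X x₁) (hx₁ : x₁ ∈ X) (hz : z ∈ X) :
    ψ x₁ ≤ ψ z + y (z - x₁) +
      β * (bregman ϑ ϑ' x₀ z - bregman ϑ ϑ' x₀ x₁ - bregman ϑ ϑ' x₁ z) := by
  have hmin' : IsMinOn (fun w => ψ w + (y w + β * bregman ϑ ϑ' x₀ w)) X x₁ := fun w hw => by
    have : y x₁ + ψ x₁ + β * bregman ϑ ϑ' x₀ x₁ ≤ y w + ψ w + β * bregman ϑ ϑ' x₀ w := hmin hw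
    show ψ x₁ + (y x₁ + β * bregman ϑ ϑ' x₀ x₁) ≤ ψ w + (y w + β * bregman ϑ ϑ' x₀ w)
    linarith
  have := hmin'.le_add_fderiv_of_convexOn hψ
    (y.hasFDerivWithinAt.add ((hasFDerivWithinAt_bregman hϑ).const_mul β)) hx₁ hz
  rw [bregman_three_point]
  simpa only [add_apply, smul_apply, smul_eq_mul, add_assoc] using this

theorem bregman_le_of_fderiv_sub_le {f : E → ℝ} {f' : E → E →L[ℝ] ℝ} {a b : E} {C : ℝ}
    (hX : Convex ℝ X) (hd : ∀ x ∈ X, HasFDerivWithinAt f (f' x) X x) (ha : a ∈ X) (hb : b ∈ X)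
    (hC : ∀ t ∈ Icc (0 : ℝ) 1, (f' (lineMap a b t) - f' a) (b - a) ≤ C * t) :
    bregman f f' a b ≤ C / 2 := by
  have hmaps := hX.mapsTo_lineMap (𝕜 := ℝ) ha hb
  have := sub_sub_le_half_of_hasDerivWithinAt (g := f ∘ lineMap a b)
    (fun t ht => (hd _ (hmaps ht)).comp_hasDerivWithinAt t hasDerivWithinAt_lineMap hmaps)
    (fun t ht => by simpa only [lineMap_apply_zero, sub_apply] using hC t ht)
  simpa only [bregman, Function.comp_apply, lineMap_apply_zero, lineMap_apply_one] using this

theorem bregman_le_of_lipschitz {f : E → ℝ} {f' : E → E →L[ℝ] ℝ} {a b : E} {L : ℝ}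
    (hX : Convex ℝ X) (hd : ∀ x ∈ X, HasFDerivWithinAt f (f' x) X x)
    (hLip : ∀ x ∈ X, ∀ x' ∈ X, ‖f' x' - f' x‖ ≤ L * ‖x - x'‖) (ha : a ∈ X) (hb : b ∈ X) :
    bregman f f' a b ≤ L / 2 * ‖b - a‖ ^ 2 := by
  have := bregman_le_of_fderiv_sub_le (C := L * ‖b - a‖ ^ 2) hX hd ha hb fun t ht => by
    have hdist : ‖a - lineMap a b t‖ = t * ‖b - a‖ := by
      rw [← dist_eq_norm, dist_comm, dist_lineMap_left, Real.norm_of_nonneg ht.1, dist_eq_norm']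
    calc (f' (lineMap a b t) - f' a) (b - a)
        ≤ ‖f' (lineMap a b t) - f' a‖ * ‖b - a‖ :=
          (Real.le_norm_self _).trans (ContinuousLinearMap.le_opNorm _ _)
      _ ≤ L * ‖a - lineMap a b t‖ * ‖b - a‖ := by
        gcongr; exact hLip a ha _ (hX.lineMap_mem ha hb ht)
      _ = L * ‖b - a‖ ^ 2 * t := by rw [hdist]; ring
  linarith

theorem half_sq_le_bregman {f : E → ℝ} {f' : E → E →L[ℝ] ℝ} {a b : E}
    (hX : Convex ℝ X) (hd : ∀ x ∈ X, HasFDerivWithinAt f (f' x) X x)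
    (hmono : ∀ x ∈ X, ∀ x' ∈ X, (f' x - f' x') (x - x') ≥ ‖x - x'‖ ^ 2) (ha : a ∈ X) (hb : b ∈ X) :
    ‖b - a‖ ^ 2 / 2 ≤ bregman f f' a b := by
  have := bregman_le_of_fderiv_sub_le (f := -f) (f' := -f') (C := -‖b - a‖ ^ 2) hX
    (fun x hx => (hd x hx).neg) ha hb fun t ht => by
      obtain rfl | ht0 := ht.1.eq_or_lt
      · simp
      have hseg : lineMap a b t - a = t • (b - a) := lineMap_vsub_left a b t
      have := hmono _ (hX.lineMap_mem ha hb ht) a ha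
      rw [hseg, map_smul, smul_eq_mul, norm_smul, Real.norm_of_nonneg ht.1, mul_pow] at this
      have key : t * ‖b - a‖ ^ 2 ≤ (f' (lineMap a b t) - f' a) (b - a) :=
        le_of_mul_le_mul_left (by nlinarith) ht0
      simp only [Pi.neg_apply, sub_apply, neg_apply] at key ⊢
      linarith
  simp only [bregman, Pi.neg_apply, neg_apply] at this ⊢
  linarith

theorem ContinuousLinearMap.apply_le_sq_div_add (ξ : E →L[ℝ] ℝ) (v : E) {β : ℝ} (hβ : 0 < β) :
    ξ v ≤ ‖ξ‖ ^ 2 / β + β / 4 * ‖v‖ ^ 2 := by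
  have hgap : ‖ξ‖ ^ 2 / β + β / 4 * ‖v‖ ^ 2 - ‖ξ‖ * ‖v‖ = (‖ξ‖ - β / 2 * ‖v‖) ^ 2 / β := by
    field_simp; ring
  have : 0 ≤ (‖ξ‖ - β / 2 * ‖v‖) ^ 2 / β := by positivity
  linarith [(Real.le_norm_self (ξ v)).trans (ξ.le_opNorm v)]

end Bregman

theorem one_step_mirror_descent_general
    {E : Type*} [NormedAddCommGroup E] [NormedSpace ℝ E]
    (X : Set E) (hXconv : Convex ℝ X)
    (φ ψ F : E → ℝ) (φ' : E → (E →L[ℝ] ℝ)) (L : ℝ) (hL : 0 < L)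
    (hF : ∀ x ∈ X, F x = φ x + ψ x)
    (hφconv : ConvexOn ℝ X φ)
    (hφdiff : ∀ x ∈ X, HasFDerivWithinAt φ (φ' x) X x)
    (hLip : ∀ x ∈ X, ∀ x' ∈ X, ‖φ' x' - φ' x‖ ≤ L * ‖x - x'‖)
    (hψconv : ConvexOn ℝ X ψ)
    (ϑ : E → ℝ) (ϑ' : E → (E →L[ℝ] ℝ))
    (hϑdiff : ∀ x ∈ X, HasFDerivWithinAt ϑ (ϑ' x) X x)
    (hstrong : ∀ x ∈ X, ∀ x' ∈ X, (ϑ' x - ϑ' x') (x - x') ≥ ‖x - x'‖ ^ 2)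
    (V : E → E → ℝ)
    (hV : ∀ x ∈ X, ∀ z ∈ X, V x z = ϑ z - ϑ x - ϑ' x (z - x))
    (β : ℝ) (hβ : β ≥ 2 * L) (y : E →L[ℝ] ℝ)
    (x₀ x₁ : E) (hx₀ : x₀ ∈ X) (hx₁ : x₁ ∈ X)
    (hmin : IsMinOn (fun z => y z + ψ z + β * V x₀ z) X x₁)
    (ξ : E →L[ℝ] ℝ) (hξ : ξ = y - φ' x₀) :
    ∀ z ∈ X, F x₁ - F z ≤
      β * (V x₀ z - V x₁ z) - ξ (x₀ - z) + ‖ξ‖ ^ 2 / β := by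
  intro z hz
  have hβ0 : 0 < β := by linarith
  have hprox : IsMinOn (fun w => y w + ψ w + β * bregman ϑ ϑ' x₀ w) X x₁ := fun w hw => by
    have h : y x₁ + ψ x₁ + β * V x₀ x₁ ≤ y w + ψ w + β * V x₀ w := hmin hw
    rwa [hV x₀ hx₀ _ hw, hV x₀ hx₀ _ hx₁] at h
  have hopt := hprox.prox_optimality hψconv (hϑdiff x₁ hx₁) hx₁ hz
  have hdescent := bregman_le_of_lipschitz hXconv hφdiff hLip hx₀ hx₁
  have hgrad := hφconv.add_fderiv_le hx₀ hz (hφdiff x₀ hx₀)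
  have hstrconv :=
    mul_le_mul_of_nonneg_left (half_sq_le_bregman hXconv hϑdiff hstrong hx₀ hx₁) hβ0.le
  have hyoung := ξ.apply_le_sq_div_add (x₀ - x₁) hβ0
  rw [norm_sub_rev] at hyoung
  have hslack : 0 ≤ (β - 2 * L) * ‖x₁ - x₀‖ ^ 2 := mul_nonneg (by linarith) (sq_nonneg _)
  have hVz : V x₀ z - V x₁ z = bregman ϑ ϑ' x₀ z - bregman ϑ ϑ' x₁ z := by
    rw [hV x₀ hx₀ z hz, hV x₁ hx₁ z hz]; rfl
  rw [hF x₁ hx₁, hF z hz, hVz]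
  subst hξ
  simp only [bregman] at hdescent
  simp only [map_sub, sub_apply] at hopt hdescent hgrad hyoung ⊢
  linarith

/-- One-step mirror descent bound: with `x₁ = Prox_{β,x₀}(y)`, `β ≥ 2L` and
`ξ = y − ∇φ(x₀)`, for all `z ∈ X`:
`F(x₁) − F(z) ≤ β[V_{x₀}(z) − V_{x₁}(z)] − ⟨ξ, x₀ − z⟩ + ‖ξ‖_*²/β`. -/
theorem one_step_mirror_descent
    {E : Type*} [NormedAddCommGroup E] [NormedSpace ℝ E] [FiniteDimensional ℝ E]
    (X : Set E) (hXconv : Convex ℝ X) (hXcomp : IsCompact X)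
    (φ ψ F : E → ℝ) (φ' : E → (E →L[ℝ] ℝ)) (ψ' : E → (E →L[ℝ] ℝ)) (L : ℝ) (hL : 0 < L)
    (hF : ∀ x ∈ X, F x = φ x + ψ x)
    (hφconv : ConvexOn ℝ X φ)
    (hφdiff : ∀ x ∈ X, HasFDerivWithinAt φ (φ' x) X x)
    (hLip : ∀ x ∈ X, ∀ x' ∈ X, ‖φ' x' - φ' x‖ ≤ L * ‖x - x'‖)
    (hψconv : ConvexOn ℝ X ψ)
    (hψ' : ∀ x ∈ X, ∀ y ∈ X, ψ y ≥ ψ x + ψ' x (y - x))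
    (ϑ : E → ℝ) (ϑ' : E → (E →L[ℝ] ℝ))
    (hϑconv : ConvexOn ℝ X ϑ)
    (hϑdiff : ∀ x ∈ X, HasFDerivWithinAt ϑ (ϑ' x) X x)
    (hstrong : ∀ x ∈ X, ∀ x' ∈ X, (ϑ' x - ϑ' x') (x - x') ≥ ‖x - x'‖ ^ 2)
    (V : E → E → ℝ)
    (hV : ∀ x ∈ X, ∀ z ∈ X, V x z = ϑ z - ϑ x - ϑ' x (z - x))
    (β : ℝ) (hβ : β ≥ 2 * L) (y : E →L[ℝ] ℝ)
    (x₀ x₁ : E) (hx₀ : x₀ ∈ X) (hx₁ : x₁ ∈ X)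
    (hmin : IsMinOn (fun z => y z + ψ z + β * V x₀ z) X x₁)
    (ξ : E →L[ℝ] ℝ) (hξ : ξ = y - φ' x₀) :
    ∀ z ∈ X, F x₁ - F z ≤
      β * (V x₀ z - V x₁ z) - ξ (x₀ - z) + ‖ξ‖ ^ 2 / β :=
  one_step_mirror_descent_general X hXconv φ ψ F φ' L hL hF hφconv hφdiff hLip hψconv ϑ ϑ' hϑdiff
    hstrong V hV β hβ y x₀ x₁ hx₀ hx₁ hmin ξ hξ
end

section
/- (Upper bound certificate) For any points x₀, …, x_N in X and any t ≥ L, the quantity ε_N(t) = N^{-1} sup_{z∈X} ∑_{i=1}^N [⟨∇φ(x_{i−1}), x_i − z⟩ + ψ(x_i) − ψ(z) + t·V_{x_{i−1}}(x_i)] satisfies F(x̂_N) − F_* ≤ ε_N(t), where x̂_N = N^{-1} ∑_{i=1}^N x_i and F_* = min_{x∈X} F(x). -/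
/-!
For every step and every `z ∈ X`, the descent lemma for `φ` at `x_{i-1}` and the supporting
hyperplane of `φ` at `x_{i-1}` combine to
`φ(x_i) - φ(z) ≤ ⟨∇φ(x_{i-1}), x_i - z⟩ + (L/2)‖x_i - x_{i-1}‖²`,
and strong convexity of the prox-function bounds the last term by `t V_{x_{i-1}}(x_i)`.
Summing over `i`, the value at `z = x_*` is at most the supremum, and Jensen's inequality for the
convex `F` at the average `x̂_N` finishes the proof.
-/

open Finset

section Segment

open Set AffineMap

variable {E : Type*} [NormedAddCommGroup E] [NormedSpace ℝ E] {s : Set E} {f : E → ℝ}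
  {f' : E → E →L[ℝ] ℝ} {a b : E}

theorem hasDerivWithinAt_comp_lineMap (hs : Convex ℝ s)
    (hf : ∀ x ∈ s, HasFDerivWithinAt f (f' x) s x) (ha : a ∈ s) (hb : b ∈ s) {u : ℝ}
    (hu : u ∈ Icc (0 : ℝ) 1) :
    HasDerivWithinAt (f ∘ lineMap a b) (f' (lineMap a b u) (b - a)) (Icc 0 1) u :=
  (hf _ (hs.lineMap_mem ha hb hu)).comp_hasDerivWithinAt u hasDerivWithinAt_lineMap
    (hs.mapsTo_lineMap ha hb)

theorem ConvexOn.add_le_of_hasFDerivWithinAt {f' : E →L[ℝ] ℝ} (hf : ConvexOn ℝ s f)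
    (hf' : HasFDerivWithinAt f f' s a) (ha : a ∈ s) (hb : b ∈ s) :
    f a + f' (b - a) ≤ f b := by
  have hconv : ConvexOn ℝ (Icc (0 : ℝ) 1) (f ∘ lineMap a b) :=
    (hf.comp_affineMap _).subset (hf.1.mapsTo_lineMap ha hb) (convex_Icc 0 1)
  have hderiv : HasDerivWithinAt (f ∘ (lineMap a b : ℝ → E)) (f' (b - a)) (Icc 0 1) 0 :=
    hf'.comp_hasDerivWithinAt_of_eq 0 hasDerivWithinAt_lineMap (hf.1.mapsTo_lineMap ha hb)
      (lineMap_apply_zero a b).symm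
  have := hconv.le_slope_of_hasDerivWithinAt (x := 0) (y := 1) (by simp) (by simp) one_pos hderiv
  simp only [slope_def_field, Function.comp_apply, lineMap_apply_one, lineMap_apply_zero,
    sub_zero, div_one] at this
  linarith

theorem le_add_fderiv_add_sq_of_lipschitz {L : ℝ} (hs : Convex ℝ s)
    (hf : ∀ x ∈ s, HasFDerivWithinAt f (f' x) s x)
    (hLip : ∀ x ∈ s, ∀ y ∈ s, ‖f' y - f' x‖ ≤ L * ‖x - y‖) (ha : a ∈ s) (hb : b ∈ s) :
    f b ≤ f a + f' a (b - a) + L / 2 * ‖b - a‖ ^ 2 := by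
  set K := ‖b - a‖ ^ 2
  set g : ℝ → ℝ := fun u ↦ f (lineMap a b u) - u * f' a (b - a) - L * K / 2 * u ^ 2
  have hg : ∀ u ∈ Icc (0 : ℝ) 1,
      HasDerivWithinAt g (f' (lineMap a b u) (b - a) - f' a (b - a) - L * K * u) (Icc 0 1) u := by
    intro u hu
    have hq : HasDerivAt (fun u : ℝ ↦ L * K / 2 * u ^ 2) (L * K * u) u := by
      refine ((hasDerivAt_pow 2 u).const_mul (L * K / 2)).congr_deriv ?_
      norm_num
      ring
    exact ((hasDerivWithinAt_comp_lineMap hs hf ha hb hu).sub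
      (hasDerivAt_mul_const _).hasDerivWithinAt).sub hq.hasDerivWithinAt
  have hslope : ∀ u ∈ Icc (0 : ℝ) 1, f' (lineMap a b u) (b - a) - f' a (b - a) ≤ L * K * u := by
    intro u hu
    have hdist : ‖a - lineMap a b u‖ = u * ‖b - a‖ := by
      rw [← dist_eq_norm, dist_comm, dist_lineMap_left, Real.norm_of_nonneg hu.1,
        dist_eq_norm']
    calc f' (lineMap a b u) (b - a) - f' a (b - a)
        = (f' (lineMap a b u) - f' a) (b - a) := rfl
      _ ≤ ‖f' (lineMap a b u) - f' a‖ * ‖b - a‖ :=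
        (Real.le_norm_self _).trans (ContinuousLinearMap.le_opNorm _ _)
      _ ≤ L * ‖a - lineMap a b u‖ * ‖b - a‖ := by
        gcongr
        exact hLip a ha _ (hs.lineMap_mem ha hb hu)
      _ = L * K * u := by rw [hdist]; ring
  have hanti : AntitoneOn g (Icc 0 1) := by
    refine antitoneOn_of_hasDerivWithinAt_nonpos (convex_Icc 0 1)
      (f' := fun u ↦ f' (lineMap a b u) (b - a) - f' a (b - a) - L * K * u)
      (fun u hu ↦ (hg u hu).continuousWithinAt) (fun u hu ↦ ?_) (fun u hu ↦ ?_)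
    · exact (hg u (interior_subset hu)).mono interior_subset
    · linarith [hslope u (interior_subset hu)]
  have := hanti (left_mem_Icc.2 zero_le_one) (right_mem_Icc.2 zero_le_one) zero_le_one
  simp only [g, lineMap_apply_one, lineMap_apply_zero] at this
  linarith

theorem ConvexOn.sub_le_fderiv_add_sq_of_lipschitz {L : ℝ} (hconv : ConvexOn ℝ s f)
    (hf : ∀ x ∈ s, HasFDerivWithinAt f (f' x) s x)
    (hLip : ∀ x ∈ s, ∀ y ∈ s, ‖f' y - f' x‖ ≤ L * ‖x - y‖) {z : E} (ha : a ∈ s) (hb : b ∈ s)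
    (hz : z ∈ s) :
    f b - f z ≤ f' a (b - z) + L / 2 * ‖b - a‖ ^ 2 := by
  have hdescent := le_add_fderiv_add_sq_of_lipschitz hconv.1 hf hLip ha hb
  have hsupport := hconv.add_le_of_hasFDerivWithinAt (hf a ha) ha hz
  have hsplit : f' a (b - z) = f' a (b - a) - f' a (z - a) := by
    rw [← map_sub, sub_sub_sub_cancel_right]
  linarith

end Segment

section Average

variable {E ι : Type*} [AddCommGroup E] [Module ℝ E] {s : Set E} {t : Finset ι} {p : ι → E}

theorem Finset.centerMass_one_eq_inv_card_smul_sum :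
    t.centerMass (fun _ ↦ (1 : ℝ)) p = (#t : ℝ)⁻¹ • ∑ i ∈ t, p i := by
  simp [Finset.centerMass]

theorem Convex.inv_card_smul_sum_mem (hs : Convex ℝ s) (ht : t.Nonempty)
    (hp : ∀ i ∈ t, p i ∈ s) : (#t : ℝ)⁻¹ • ∑ i ∈ t, p i ∈ s := by
  rw [← Finset.centerMass_one_eq_inv_card_smul_sum]
  exact hs.centerMass_mem (fun _ _ ↦ zero_le_one) (by simpa using ht) hp

theorem ConvexOn.map_inv_card_smul_sum_le {f : E → ℝ} (hf : ConvexOn ℝ s f) (ht : t.Nonempty)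
    (hp : ∀ i ∈ t, p i ∈ s) :
    f ((#t : ℝ)⁻¹ • ∑ i ∈ t, p i) ≤ (#t : ℝ)⁻¹ * ∑ i ∈ t, f (p i) := by
  have := hf.map_centerMass_le (fun _ _ ↦ zero_le_one) (by simpa using ht) hp
  rwa [Finset.centerMass_one_eq_inv_card_smul_sum, Finset.centerMass_one_eq_inv_card_smul_sum,
    smul_eq_mul] at this

end Average

theorem certificate_upper_bound_general
    {E : Type*} [NormedAddCommGroup E] [NormedSpace ℝ E]
    (X : Set E) (hXcomp : IsCompact X)
    (φ ψ F : E → ℝ) (φ' : E → (E →L[ℝ] ℝ)) (L : ℝ) (hL : 0 < L)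
    (hF : ∀ x ∈ X, F x = φ x + ψ x)
    (hφconv : ConvexOn ℝ X φ)
    (hφdiff : ∀ x ∈ X, HasFDerivWithinAt φ (φ' x) X x)
    (hLip : ∀ x ∈ X, ∀ x' ∈ X, ‖φ' x' - φ' x‖ ≤ L * ‖x - x'‖)
    (hψconv : ConvexOn ℝ X ψ) (hψcont : ContinuousOn ψ X)
    (V : E → E → ℝ)
    (hVstrong : ∀ x ∈ X, ∀ z ∈ X, V x z ≥ (1 / 2) * ‖x - z‖ ^ 2)
    (N : ℕ) (hN : 0 < N)
    (x : ℕ → E) (hx : ∀ i, i ≤ N → x i ∈ X)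
    (t : ℝ) (ht : t ≥ L)
    (xhat : E) (hxhat : xhat = (N : ℝ)⁻¹ • ∑ i ∈ Finset.range N, x (i + 1))
    (xstar : E) (hxstar : xstar ∈ X)
    (εN : ℝ)
    (hεN : εN = (N : ℝ)⁻¹ * sSup ((fun z => ∑ i ∈ Finset.range N,
      (φ' (x i) (x (i + 1) - z) + ψ (x (i + 1)) - ψ z + t * V (x i) (x (i + 1)))) '' X)) :
    F xhat - F xstar ≤ εN := by
  set gap : E → ℝ := fun z => ∑ i ∈ range N,
    (φ' (x i) (x (i + 1) - z) + ψ (x (i + 1)) - ψ z + t * V (x i) (x (i + 1)))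
  have hxs : ∀ i ∈ range N, x i ∈ X ∧ x (i + 1) ∈ X := fun i hi ↦
    ⟨hx i (mem_range.1 hi).le, hx (i + 1) (mem_range.1 hi)⟩
  have hFconv : ConvexOn ℝ X F := (hφconv.add hψconv).congr fun y hy ↦ (hF y hy).symm
  have hjensen : F xhat ≤ (N : ℝ)⁻¹ * ∑ i ∈ range N, F (x (i + 1)) := by
    simpa [hxhat] using hFconv.map_inv_card_smul_sum_le (nonempty_range_iff.2 hN.ne') fun i hi ↦ (hxs i hi).2
  have hstep : ∀ i ∈ range N, F (x (i + 1)) - F xstar ≤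
      φ' (x i) (x (i + 1) - xstar) + ψ (x (i + 1)) - ψ xstar + t * V (x i) (x (i + 1)) := by
    intro i hi
    obtain ⟨hxi, hxi'⟩ := hxs i hi
    have hφ := hφconv.sub_le_fderiv_add_sq_of_lipschitz hφdiff hLip hxi hxi' hxstar
    have hV : L / 2 * ‖x (i + 1) - x i‖ ^ 2 ≤ t * V (x i) (x (i + 1)) := by
      have := hVstrong _ hxi _ hxi'
      rw [norm_sub_rev] at this
      nlinarith [sq_nonneg ‖x (i + 1) - x i‖]
    rw [hF _ hxi', hF _ hxstar]
    linarith
  have hsup : gap xstar ≤ sSup (gap '' X) :=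
    le_csSup (hXcomp.image_of_continuousOn (by fun_prop)).bddAbove ⟨xstar, hxstar, rfl⟩
  have hNpos : (0 : ℝ) < N := by exact_mod_cast hN
  calc F xhat - F xstar ≤ (N : ℝ)⁻¹ * ∑ i ∈ range N, (F (x (i + 1)) - F xstar) := by
        rw [sum_sub_distrib, sum_const, card_range, nsmul_eq_mul, mul_sub, ← mul_assoc,
          inv_mul_cancel₀ hNpos.ne', one_mul]
        linarith
    _ ≤ (N : ℝ)⁻¹ * gap xstar := by gcongr; exact sum_le_sum hstep
    _ ≤ εN := by rw [hεN]; gcongr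

/-- Upper bound certificate: for any points `x₀, …, x_N` in `X` and `t ≥ L`,
`F(x̂_N) − F_* ≤ ε_N(t)` where
`ε_N(t) = N⁻¹ sup_{z∈X} ∑ [⟨∇φ(x_{i−1}), x_i − z⟩ + ψ(x_i) − ψ(z) + t·V_{x_{i−1}}(x_i)]`. -/
theorem certificate_upper_bound
    {E : Type*} [NormedAddCommGroup E] [NormedSpace ℝ E] [FiniteDimensional ℝ E]
    (X : Set E) (hXconv : Convex ℝ X) (hXcomp : IsCompact X) (hXne : X.Nonempty)
    (φ ψ F : E → ℝ) (φ' : E → (E →L[ℝ] ℝ)) (L : ℝ) (hL : 0 < L)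
    (hF : ∀ x ∈ X, F x = φ x + ψ x)
    (hφconv : ConvexOn ℝ X φ)
    (hφdiff : ∀ x ∈ X, HasFDerivWithinAt φ (φ' x) X x)
    (hLip : ∀ x ∈ X, ∀ x' ∈ X, ‖φ' x' - φ' x‖ ≤ L * ‖x - x'‖)
    (hψconv : ConvexOn ℝ X ψ) (hψcont : ContinuousOn ψ X)
    (ϑ : E → ℝ) (ϑ' : E → (E →L[ℝ] ℝ))
    (hϑconv : ConvexOn ℝ X ϑ)
    (hϑdiff : ∀ x ∈ X, HasFDerivWithinAt ϑ (ϑ' x) X x)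
    (V : E → E → ℝ)
    (hV : ∀ x ∈ X, ∀ z ∈ X, V x z = ϑ z - ϑ x - ϑ' x (z - x))
    (hVstrong : ∀ x ∈ X, ∀ z ∈ X, V x z ≥ (1 / 2) * ‖x - z‖ ^ 2)
    (N : ℕ) (hN : 0 < N)
    (x : ℕ → E) (hx : ∀ i, i ≤ N → x i ∈ X)
    (t : ℝ) (ht : t ≥ L)
    (xhat : E) (hxhat : xhat = (N : ℝ)⁻¹ • ∑ i ∈ Finset.range N, x (i + 1))
    (xstar : E) (hxstar : xstar ∈ X) (hmin : IsMinOn F X xstar)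
    (εN : ℝ)
    (hεN : εN = (N : ℝ)⁻¹ * sSup ((fun z => ∑ i ∈ Finset.range N,
      (φ' (x i) (x (i + 1) - z) + ψ (x (i + 1)) - ψ z + t * V (x i) (x (i + 1)))) '' X)) :
    F xhat - F xstar ≤ εN :=
  certificate_upper_bound_general X hXcomp φ ψ F φ' L hL hF hφconv hφdiff hLip hψconv hψcont V
    hVstrong N hN x hx t ht xhat hxhat xstar hxstar εN hεN
end

section
/- (Certificate difference bound, deterministic core) Suppose ∑_{i=1}^N ⟨ξ_i, z_{i−1} − x_{i−1}⟩ ≤ A and ∑_{i=1}^N ‖ξ_i‖_*² ≤ B, and that for all z ∈ X, ∑_{i=1}^N ⟨ξ_i, z − z_{i−1}⟩ ≤ ν^{-1} V_{x_0}(z) + (ν/2) ∑_{i=1}^N ‖ξ_i‖_*². Then for all z ∈ X and all μ, ν > 0: ∑_{i=1}^N ⟨ξ_i, z − x_i⟩ ≤ ν^{-1} R²Θ + A + (μ/2 + ν/2)B + μ^{-1} ∑_{i=1}^N V_{x_{i−1}}(x_i), where V_{x_0}(z) ≤ R²Θ. -/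
/-!
Split `w - x (i+1) = (w - z i) + (z i - x i) + (x i - x (i+1))`. The first sum is the mirror-descent
regret of the auxiliary sequence `z`, the second is bounded by `A`, and each term of the third is
bounded by Young's inequality `⟨ξ, h⟩ ≤ (μ/2)‖ξ‖² + (1/(2μ))‖h‖²` followed by strong convexity
`½‖x i - x (i+1)‖² ≤ V (x i) (x (i+1))`.
-/

open Finset

lemma mul_le_half_mul_sq_add_inv_mul {μ : ℝ} (hμ : 0 < μ) (a b : ℝ) :
    a * b ≤ μ / 2 * a ^ 2 + μ⁻¹ * (1 / 2 * b ^ 2) := by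
  have hsq : 0 ≤ μ⁻¹ * (μ * a - b) ^ 2 / 2 := by positivity
  have hexpand : μ⁻¹ * (μ * a - b) ^ 2 / 2 = μ / 2 * a ^ 2 + μ⁻¹ * (1 / 2 * b ^ 2) - a * b := by
    field_simp
    ring
  linarith

lemma ContinuousLinearMap.apply_le_half_mul_opNorm_sq_add
    {E : Type*} [SeminormedAddCommGroup E] [NormedSpace ℝ E] {μ : ℝ} (hμ : 0 < μ)
    (f : E →L[ℝ] ℝ) (h : E) :
    f h ≤ μ / 2 * ‖f‖ ^ 2 + μ⁻¹ * (1 / 2 * ‖h‖ ^ 2) :=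
  calc f h ≤ ‖f‖ * ‖h‖ := (le_abs_self _).trans (f.le_opNorm h)
    _ ≤ _ := mul_le_half_mul_sq_add_inv_mul hμ _ _

lemma sum_apply_sub_succ_le {E : Type*} [SeminormedAddCommGroup E] [NormedSpace ℝ E]
    {μ : ℝ} (hμ : 0 < μ) (V : E → E → ℝ) (N : ℕ) (x : ℕ → E) (ξ : ℕ → (E →L[ℝ] ℝ))
    (hV : ∀ i < N, 1 / 2 * ‖x i - x (i + 1)‖ ^ 2 ≤ V (x i) (x (i + 1))) :
    ∑ i ∈ range N, ξ (i + 1) (x i - x (i + 1)) ≤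
      μ / 2 * ∑ i ∈ range N, ‖ξ (i + 1)‖ ^ 2 + μ⁻¹ * ∑ i ∈ range N, V (x i) (x (i + 1)) := by
  rw [mul_sum, mul_sum, ← sum_add_distrib]
  refine sum_le_sum fun i hi ↦ ?_
  calc ξ (i + 1) (x i - x (i + 1))
      ≤ μ / 2 * ‖ξ (i + 1)‖ ^ 2 + μ⁻¹ * (1 / 2 * ‖x i - x (i + 1)‖ ^ 2) :=
        (ξ (i + 1)).apply_le_half_mul_opNorm_sq_add hμ _
    _ ≤ μ / 2 * ‖ξ (i + 1)‖ ^ 2 + μ⁻¹ * V (x i) (x (i + 1)) := by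
        gcongr
        exact hV i (mem_range.mp hi)

theorem certificate_difference_core_general
    {E : Type*} [NormedAddCommGroup E] [NormedSpace ℝ E]
    (X : Set E)
    (V : E → E → ℝ)
    (hVstrong : ∀ x ∈ X, ∀ z ∈ X, V x z ≥ (1 / 2) * ‖x - z‖ ^ 2)
    (R Θ A B μ ν : ℝ) (hμ : 0 < μ) (hν : 0 < ν)
    (N : ℕ)
    (x z : ℕ → E) (hx : ∀ i, i ≤ N → x i ∈ X)
    (ξ : ℕ → (E →L[ℝ] ℝ))
    (hV₀ : ∀ w ∈ X, V (x 0) w ≤ R ^ 2 * Θ)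
    (hA : ∑ i ∈ Finset.range N, ξ (i + 1) (z i - x i) ≤ A)
    (hB : ∑ i ∈ Finset.range N, ‖ξ (i + 1)‖ ^ 2 ≤ B)
    (hz : ∀ w ∈ X, ∑ i ∈ Finset.range N, ξ (i + 1) (w - z i) ≤
      ν⁻¹ * V (x 0) w + (ν / 2) * ∑ i ∈ Finset.range N, ‖ξ (i + 1)‖ ^ 2) :
    ∀ w ∈ X, ∑ i ∈ Finset.range N, ξ (i + 1) (w - x (i + 1)) ≤
      ν⁻¹ * (R ^ 2 * Θ) + A + (μ / 2 + ν / 2) * B +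
        μ⁻¹ * ∑ i ∈ Finset.range N, V (x i) (x (i + 1)) := by
  intro w hw
  have hsplit : ∑ i ∈ range N, ξ (i + 1) (w - x (i + 1)) =
      ∑ i ∈ range N, ξ (i + 1) (w - z i) + ∑ i ∈ range N, ξ (i + 1) (z i - x i) +
        ∑ i ∈ range N, ξ (i + 1) (x i - x (i + 1)) := by
    simp only [← sum_add_distrib, ← map_add]
    exact sum_congr rfl fun i _ ↦ by abel_nf
  have hcomp := sum_apply_sub_succ_le hμ V N x ξ fun i hi ↦
    hVstrong _ (hx i hi.le) _ (hx (i + 1) hi)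
  have hV₀w : ν⁻¹ * V (x 0) w ≤ ν⁻¹ * (R ^ 2 * Θ) := by gcongr; exact hV₀ w hw
  have hB' : (μ / 2 + ν / 2) * ∑ i ∈ range N, ‖ξ (i + 1)‖ ^ 2 ≤ (μ / 2 + ν / 2) * B := by
    gcongr
  linarith [hz w hw]

/-- Certificate difference bound, deterministic core. -/
theorem certificate_difference_core
    {E : Type*} [NormedAddCommGroup E] [NormedSpace ℝ E] [FiniteDimensional ℝ E]
    (X : Set E) (hXconv : Convex ℝ X) (hXcomp : IsCompact X)
    (V : E → E → ℝ)
    (hVstrong : ∀ x ∈ X, ∀ z ∈ X, V x z ≥ (1 / 2) * ‖x - z‖ ^ 2)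
    (R Θ A B μ ν : ℝ) (hμ : 0 < μ) (hν : 0 < ν)
    (N : ℕ)
    (x z : ℕ → E) (hx : ∀ i, i ≤ N → x i ∈ X) (hzX : ∀ i, i ≤ N → z i ∈ X)
    (ξ : ℕ → (E →L[ℝ] ℝ))
    (hV₀ : ∀ w ∈ X, V (x 0) w ≤ R ^ 2 * Θ)
    (hA : ∑ i ∈ Finset.range N, ξ (i + 1) (z i - x i) ≤ A)
    (hB : ∑ i ∈ Finset.range N, ‖ξ (i + 1)‖ ^ 2 ≤ B)
    (hz : ∀ w ∈ X, ∑ i ∈ Finset.range N, ξ (i + 1) (w - z i) ≤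
      ν⁻¹ * V (x 0) w + (ν / 2) * ∑ i ∈ Finset.range N, ‖ξ (i + 1)‖ ^ 2) :
    ∀ w ∈ X, ∑ i ∈ Finset.range N, ξ (i + 1) (w - x (i + 1)) ≤
      ν⁻¹ * (R ^ 2 * Θ) + A + (μ / 2 + ν / 2) * B +
        μ⁻¹ * ∑ i ∈ Finset.range N, V (x i) (x (i + 1)) :=
  certificate_difference_core_general X V hVstrong R Θ A B μ ν hμ hν N x z hx ξ hV₀ hA hB hz
end
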